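/- arXiv:2506.12429 — 4 statements merged into one kernel-verified Lean document; each statement's English description precedes it below -/
import Mathlib

section
/- Let $R$ be a ring and $N_1 \subsetneq N_2 \subsetneq \cdots$ a strictly increasing chain of submodules of an $R$-module $M$, with union $N$. For each $i$ let $g_i \colon N \to I_i$ be an $R$-linear map with $g_i|_{N_{i-1}} = 0$ and $g_i \ne 0$ (setting $N_0 = 0$). Then the induced map $g \colon N \to \bigoplus_i I_i$ does not factor through the inclusion of any finite sub-direct-sum $\bigoplus_{i \in F} I_i$ for a finite set $F$. -/
open DirectSum

theorem stmt_11_general {R M : Type*} [Ring R] [AddCommGroup M] [Module R M]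
    (N : ℕ → Submodule R M)
    {I : ℕ → Type*} [∀ i, AddCommGroup (I i)] [∀ i, Module R (I i)]
    (g : ∀ i : ℕ, ↥(⨆ n, N n) →ₗ[R] I i)
    (hg0 : ∀ i : ℕ, g i ≠ 0)
    (G : ↥(⨆ n, N n) →ₗ[R] ⨁ i, I i)
    (hG : ∀ (i : ℕ) (x : ↥(⨆ n, N n)), G x i = g i x) :
    ¬ ∃ F : Finset ℕ, ∀ (x : ↥(⨆ n, N n)) (j : ℕ), j ∉ F → G x j = 0 := by
  rintro ⟨F, hF⟩
  obtain ⟨j, hjF⟩ := Infinite.exists_notMem_finset F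
  obtain ⟨x, hx⟩ := DFunLike.ne_iff.mp (hg0 j)
  exact hx (by simpa [hG] using hF x j hjF)

/-- With `gᵢ` as above (vanishing on `Nᵢ` but nonzero), the induced map
`G : N → ⨁ᵢ Iᵢ` does not factor through any finite sub-direct-sum. -/
theorem stmt_11 {R M : Type*} [Ring R] [AddCommGroup M] [Module R M]
    (N : ℕ → Submodule R M) (hN : StrictMono N)
    {I : ℕ → Type*} [∀ i, AddCommGroup (I i)] [∀ i, Module R (I i)]
    (g : ∀ i : ℕ, ↥(⨆ n, N n) →ₗ[R] I i)
    (hg : ∀ (i : ℕ) (x : ↥(⨆ n, N n)), (x : M) ∈ N i → g i x = 0)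
    (hg0 : ∀ i : ℕ, g i ≠ 0)
    (G : ↥(⨆ n, N n) →ₗ[R] ⨁ i, I i)
    (hG : ∀ (i : ℕ) (x : ↥(⨆ n, N n)), G x i = g i x) :
    ¬ ∃ F : Finset ℕ, ∀ (x : ↥(⨆ n, N n)) (j : ℕ), j ∉ F → G x j = 0 :=
  stmt_11_general N g hg0 G hG
end

section
/- Let $R$ be a commutative noetherian local ring with maximal ideal $\mathfrak{m}$ and let $E$ be the injective hull of $R/\mathfrak{m}$. Let $M$ be an $R$-module that is not finitely generated. Then there exists a countable family of copies $E_i = E$ and an $R$-linear map $f \colon M \to \bigoplus_{i \ge 1} E_i$ that does not factor through any finite sub-direct-sum $\bigoplus_{i \in F} E_i$. -/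
open DirectSum

universe v u

/-- An extension of `v`-small modules is `v`-small. -/
theorem aux_small_ext {R : Type*} [Ring R] {B : Type*} [AddCommGroup B] [Module R B]
    (N : Submodule R B) [Small.{v} N] [Small.{v} (B ⧸ N)] : Small.{v} B := by
  classical
  have hsurj : Function.Surjective N.mkQ := Submodule.mkQ_surjective N
  set s : (B ⧸ N) → B := Function.surjInv hsurj with hs
  have hsec : ∀ q, N.mkQ (s q) = q := fun q => Function.surjInv_eq hsurj q
  have hmem : ∀ b : B, b - s (N.mkQ b) ∈ N := by
    intro b
    have h0 : N.mkQ (b - s (N.mkQ b)) = 0 := by rw [map_sub, hsec, sub_self]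
    rwa [Submodule.mkQ_apply, Submodule.Quotient.mk_eq_zero] at h0
  have hinj : Function.Injective
      (fun b : B => ((⟨b - s (N.mkQ b), hmem b⟩ : N), N.mkQ b)) := by
    intro a b h
    simp only [Prod.mk.injEq, Subtype.mk.injEq] at h
    obtain ⟨h1, h2⟩ := h
    rw [h2] at h1
    exact sub_left_inj.mp h1
  exact small_of_injective hinj

/-- Quotients by powers of an ideal with small quotient are small. -/
theorem aux_small_pow {R : Type u} [CommRing R] [IsNoetherianRing R] (I : Ideal R)
    (hsm : Small.{v} (R ⧸ I)) : ∀ n : ℕ, Small.{v} (R ⧸ (I ^ n : Ideal R)) := by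
  classical
  intro n
  induction n with
  | zero =>
      haveI : Subsingleton (R ⧸ (I ^ 0 : Ideal R)) := by
        rw [pow_zero, Ideal.one_eq_top]
        exact Submodule.Quotient.subsingleton_iff.mpr rfl
      infer_instance
  | succ n ih =>
      set S : Ideal R := I ^ (n + 1) with hSdef
      set T : Ideal R := I ^ n with hTdef
      have hST : S ≤ T := Ideal.pow_le_pow_right (Nat.le_succ n)
      set NN : Submodule R (R ⧸ S) := Submodule.map (Submodule.mkQ S) T with hNNdef
      haveI h1 : Small.{v} (↥NN) := by
        obtain ⟨sg, hsg⟩ := IsNoetherian.noetherian T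
        haveI := hsm
        set q : (R ⧸ I) → R := Function.surjInv (Submodule.mkQ_surjective I) with hqdef
        have hq : ∀ z, Submodule.mkQ I (q z) = z := fun z =>
          Function.surjInv_eq (Submodule.mkQ_surjective I) z
        have hmem : ∀ a ∈ sg, (Submodule.mkQ S) a ∈ NN := fun a ha =>
          Submodule.mem_map_of_mem (by rw [← hsg]; exact Submodule.subset_span ha)
        set Fn : (↥sg → R ⧸ I) → ↥NN := fun c =>
          ⟨∑ a ∈ sg.attach, q (c a) • (Submodule.mkQ S) a.1,
            Submodule.sum_mem _ fun a _ => Submodule.smul_mem _ _ (hmem a.1 a.2)⟩ with hFndef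
        have hFn : Function.Surjective Fn := by
          rintro ⟨y, hy⟩
          obtain ⟨x, hx, rfl⟩ := Submodule.mem_map.mp hy
          rw [← hsg] at hx
          obtain ⟨c0, -, hc0⟩ := Submodule.mem_span_finset.mp hx
          refine ⟨fun a => Submodule.mkQ I (c0 a.1), Subtype.ext ?_⟩
          show ∑ a ∈ sg.attach, q (Submodule.mkQ I (c0 a.1)) • Submodule.mkQ S a.1
              = Submodule.mkQ S x
          rw [← hc0, map_sum,
            Finset.sum_attach sg (fun a => q (Submodule.mkQ I (c0 a)) • Submodule.mkQ S a)]
          refine Finset.sum_congr rfl fun a ha => ?_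
          rw [← map_smul]
          refine (Submodule.Quotient.eq S).mpr ?_
          have hdiff : q (Submodule.mkQ I (c0 a)) - c0 a ∈ I := by
            have hz : Submodule.mkQ I (q (Submodule.mkQ I (c0 a))) = Submodule.mkQ I (c0 a) :=
              hq _
            rw [← sub_eq_zero, ← map_sub, Submodule.mkQ_apply,
              Submodule.Quotient.mk_eq_zero] at hz
            exact hz
          have haT : a ∈ T := by rw [← hsg]; exact Submodule.subset_span ha
          have hS : (q (Submodule.mkQ I (c0 a)) - c0 a) * a ∈ S := by
            have hmul : (q (Submodule.mkQ I (c0 a)) - c0 a) * a ∈ I * T :=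
              Ideal.mul_mem_mul hdiff haT
            have hIT : I * T = S := by rw [hSdef, hTdef, pow_succ, mul_comm]
            rwa [hIT] at hmul
          simpa [sub_smul, smul_eq_mul, sub_mul] using hS
        exact small_of_surjective hFn
      haveI h2 : Small.{v} ((R ⧸ S) ⧸ NN) := by
        haveI := ih
        exact small_map (Submodule.quotientQuotientEquivQuotient S T hST).toEquiv
      exact aux_small_ext NN

/-- A noetherian local ring whose residue field embeds in a `v`-small module is `v`-small. -/
theorem aux_small_R {R : Type u} [CommRing R] [IsNoetherianRing R] [IsLocalRing R]
    {E : Type v} [AddCommGroup E] [Module R E]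
    (i : (R ⧸ IsLocalRing.maximalIdeal R) →ₗ[R] E) (hi : Function.Injective i) :
    Small.{v} R := by
  classical
  have hres : Small.{v} (R ⧸ IsLocalRing.maximalIdeal R) := small_of_injective hi
  have hn : ∀ n : ℕ, Small.{v} (R ⧸ (IsLocalRing.maximalIdeal R ^ n : Ideal R)) :=
    aux_small_pow _ hres
  haveI : ∀ n : ℕ, Small.{v} (R ⧸ (IsLocalRing.maximalIdeal R ^ n : Ideal R)) := hn
  have hinj : Function.Injective
      (fun (r : R) (n : ℕ) => Submodule.mkQ (IsLocalRing.maximalIdeal R ^ n : Ideal R) r) := by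
    intro a b hab
    have h0 : ∀ n : ℕ, a - b ∈ (IsLocalRing.maximalIdeal R ^ n : Ideal R) := by
      intro n
      have hcomp := congrFun hab n
      rwa [← sub_eq_zero, ← map_sub, Submodule.mkQ_apply,
        Submodule.Quotient.mk_eq_zero] at hcomp
    have hbot : a - b ∈ (⨅ n : ℕ, IsLocalRing.maximalIdeal R ^ n : Ideal R) :=
      Submodule.mem_iInf _ |>.mpr h0
    rw [Ideal.iInf_pow_eq_bot_of_isLocalRing _
      (Ideal.IsMaximal.ne_top (IsLocalRing.maximalIdeal.isMaximal R))] at hbot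
    have := Submodule.mem_bot R |>.mp hbot
    exact sub_eq_zero.mp this
  exact small_of_injective hinj

/-- Baer's criterion for a countable direct sum over a noetherian ring. -/
theorem aux_baer_directSum {R : Type*} [CommRing R] [IsNoetherianRing R]
    {E : Type*} [AddCommGroup E] [Module R E] (hE : Module.Baer R E) :
    Module.Baer R (⨁ _ : ℕ, E) := by
  classical
  intro I g
  obtain ⟨sg, hsg⟩ := IsNoetherian.noetherian I
  set F : Finset ℕ := sg.attach.biUnion
    (fun a => (g ⟨a.1, hsg ▸ Submodule.subset_span a.2⟩).support) with hFdef
  set P : Submodule R (⨁ _ : ℕ, E) :=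
    { carrier := {y : ⨁ _ : ℕ, E | ∀ j ∉ F, y j = 0}
      zero_mem' := fun j _ => DirectSum.zero_apply (β := fun _ : ℕ => E) j
      add_mem' := fun {a b} ha hb j hj =>
        (DirectSum.add_apply a b j).trans (by rw [ha j hj, hb j hj, add_zero])
      smul_mem' := fun r y hy j hj =>
        (DirectSum.smul_apply r y j).trans (by rw [hy j hj, smul_zero]) } with hPdef
  have hPmem : ∀ y : ⨁ _ : ℕ, E, y ∈ P ↔ ∀ j ∉ F, y j = 0 := fun y => Iff.rfl
  have hgen' : ∀ (y : R) (hy : y ∈ Submodule.span R (sg : Set R)),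
      ∀ h : y ∈ I, g ⟨y, h⟩ ∈ P := by
    intro y hy
    induction hy using Submodule.span_induction with
    | mem a ha =>
        intro h
        rw [hPmem]
        intro j hj
        have hFsub : (g ⟨a, hsg ▸ Submodule.subset_span ha⟩).support ⊆ F := by
          intro j' hj'
          exact Finset.mem_biUnion.mpr ⟨⟨a, ha⟩, Finset.mem_attach _ _, hj'⟩
        have hns : j ∉ (g ⟨a, hsg ▸ Submodule.subset_span ha⟩).support :=
          fun hc => hj (hFsub hc)
        exact DFinsupp.notMem_support_iff.mp hns
    | zero =>
        intro h
        have hz : (⟨(0 : R), h⟩ : I) = 0 := Subtype.ext rfl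
        rw [hz, map_zero]
        exact Submodule.zero_mem _
    | add a b ha hb iha ihb =>
        intro h
        have hsum : (⟨a + b, h⟩ : I)
            = ⟨a, hsg ▸ ha⟩ + ⟨b, hsg ▸ hb⟩ := Subtype.ext rfl
        rw [hsum, map_add]
        exact Submodule.add_mem _ (iha _) (ihb _)
    | smul r a ha iha =>
        intro h
        have hsm : (⟨r • a, h⟩ : I) = r • (⟨a, hsg ▸ ha⟩ : I) := Subtype.ext rfl
        rw [hsm, map_smul]
        exact Submodule.smul_mem _ _ (iha _)
  have hgen : ∀ x : I, g x ∈ P := fun x =>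
    hgen' x.1 (by rw [hsg]; exact x.2) x.2
  choose h hh using fun j : ℕ => hE I ((DFinsupp.lapply j : (⨁ _ : ℕ, E) →ₗ[R] E).comp g)
  refine ⟨∑ j ∈ F, (DirectSum.lof R ℕ (fun _ => E) j).comp (h j), ?_⟩
  intro x hx
  refine DFinsupp.ext fun j' => ?_
  have hsum : (∑ j ∈ F, (DirectSum.lof R ℕ (fun _ => E) j).comp (h j)) x
      = ∑ j ∈ F, DirectSum.of (fun _ : ℕ => E) j (h j x) := by
    rw [LinearMap.sum_apply]
    exact Finset.sum_congr rfl fun j _ => DirectSum.lof_eq_of R ℕ (fun _ => E) j (h j x)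
  have heval : ((∑ j ∈ F, DirectSum.of (fun _ : ℕ => E) j (h j x)) : ⨁ _ : ℕ, E) j'
      = ∑ j ∈ F, (DirectSum.of (fun _ : ℕ => E) j (h j x)) j' :=
    DFinsupp.finset_sum_apply F _ j'
  have hstart : (∑ j ∈ F, (DirectSum.lof R ℕ (fun _ => E) j).comp (h j)) x j'
      = ∑ j ∈ F, (DirectSum.of (fun _ : ℕ => E) j (h j x)) j' :=
    (congrArg (fun y : ⨁ _ : ℕ, E => y j') hsum).trans heval
  by_cases hj' : j' ∈ F
  · have hterm : ∀ b ∈ F, b ≠ j' → (DirectSum.of (fun _ : ℕ => E) b (h b x)) j' = 0 :=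
      fun b _ hb => DirectSum.of_eq_of_ne _ _ _ hb.symm
    have hone : ∑ j ∈ F, (DirectSum.of (fun _ : ℕ => E) j (h j x)) j'
        = (DirectSum.of (fun _ : ℕ => E) j' (h j' x)) j' :=
      Finset.sum_eq_single_of_mem j' hj' hterm
    have hsame : (DirectSum.of (fun _ : ℕ => E) j' (h j' x)) j' = h j' x :=
      DirectSum.of_eq_same (β := fun _ : ℕ => E) j' (h j' x)
    exact hstart.trans (hone.trans (hsame.trans (hh j' x hx)))
  · have hz : ∀ b ∈ F, (DirectSum.of (fun _ : ℕ => E) b (h b x)) j' = 0 :=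
      fun b hb => DirectSum.of_eq_of_ne _ _ _ (fun hc => hj' (hc ▸ hb))
    have hzero : ∑ j ∈ F, (DirectSum.of (fun _ : ℕ => E) j (h j x)) j' = 0 :=
      Finset.sum_eq_zero hz
    exact hstart.trans (hzero.trans ((hPmem _).mp (hgen ⟨x, hx⟩) j' hj').symm)

/-- Over a commutative noetherian local ring with residue field injective hull
`E`, every non-finitely-generated module admits a map to a countable direct sum
of copies of `E` not factoring through any finite sub-direct-sum. -/
theorem stmt_13 {R : Type*} [CommRing R] [IsNoetherianRing R] [IsLocalRing R]
    {E : Type*} [AddCommGroup E] [Module R E] [Module.Injective R E]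
    (i : (R ⧸ IsLocalRing.maximalIdeal R) →ₗ[R] E) (hi : Function.Injective i)
    (hess : ∀ N : Submodule R E, N ≠ ⊥ → N ⊓ LinearMap.range i ≠ ⊥)
    (M : Type*) [AddCommGroup M] [Module R M] (hM : ¬ Module.Finite R M) :
    ∃ f : M →ₗ[R] ⨁ _ : ℕ, E,
      ¬ ∃ F : Finset ℕ, ∀ (x : M) (j : ℕ), j ∉ F → f x j = 0 := by
  classical
  haveI hsmall := aux_small_R i hi
  have hBE : Module.Baer R E := Module.Baer.of_injective ‹Module.Injective R E›
  have hBD : Module.Baer R (⨁ _ : ℕ, E) := aux_baer_directSum hBE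
  -- build a strictly increasing chain of f.g. submodules
  have key : ∀ N : Submodule R M, N.FG → ∃ y, y ∉ N := by
    intro N hN
    by_contra h
    push_neg at h
    apply hM
    have hN' : N = ⊤ := eq_top_iff.mpr fun y _ => h y
    exact Module.finite_def.mpr (hN' ▸ hN)
  let chain : ℕ → {p : Submodule R M // p.FG} := fun n =>
    Nat.rec ⟨⊥, Submodule.fg_bot⟩
      (fun _ p => ⟨p.1 ⊔ Submodule.span R {(key p.1 p.2).choose},
        p.2.sup (Submodule.fg_span_singleton _)⟩) n
  let Nn : ℕ → Submodule R M := fun n => (chain n).1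
  let x : ℕ → M := fun n => (key (chain n).1 (chain n).2).choose
  have hx : ∀ n, x n ∉ Nn n := fun n => (key (chain n).1 (chain n).2).choose_spec
  have hstep : ∀ n, Nn (n + 1) = Nn n ⊔ Submodule.span R {x n} := fun n => rfl
  have hmono : Monotone Nn := monotone_nat_of_le_succ fun n => by
    rw [hstep]; exact le_sup_left
  have hxmem : ∀ n, x n ∈ Nn (n + 1) := fun n => by
    rw [hstep]
    exact Submodule.mem_sup_right (Submodule.mem_span_singleton_self _)
  set S : Submodule R M := ⨆ n, Nn n with hSdef
  have hmemS : ∀ y : M, y ∈ S ↔ ∃ n, y ∈ Nn n := fun y =>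
    Submodule.mem_iSup_of_chain (⟨Nn, hmono⟩ : ℕ →o Submodule R M) y
  have hxS : ∀ n, x n ∈ S := fun n => (hmemS _).mpr ⟨n + 1, hxmem n⟩
  -- construct the functionals
  have hphi : ∀ n : ℕ, ∃ φ : S →ₗ[R] E,
      (∀ s : S, (s : M) ∈ Nn n → φ s = 0) ∧ φ ⟨x n, hxS n⟩ ≠ 0 := by
    intro n
    set N' : Submodule R S := (Nn n).comap S.subtype with hN'def
    set xb : S ⧸ N' := Submodule.Quotient.mk ⟨x n, hxS n⟩ with hxbdef
    have hxb : xb ≠ 0 := by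
      rw [hxbdef, Ne, Submodule.Quotient.mk_eq_zero]
      simpa [hN'def, Submodule.mem_comap] using hx n
    set ts : R →ₗ[R] S ⧸ N' := LinearMap.toSpanSingleton R _ xb with htsdef
    have hts1 : ts 1 = xb := by simp [htsdef]
    have hker : LinearMap.ker ts ≠ ⊤ := by
      intro h
      apply hxb
      have h1 : (1 : R) ∈ LinearMap.ker ts := h ▸ Submodule.mem_top
      rw [LinearMap.mem_ker, hts1] at h1
      exact h1
    have hle : LinearMap.ker ts ≤ IsLocalRing.maximalIdeal R :=
      IsLocalRing.le_maximalIdeal hker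
    set θ : R →ₗ[R] E := i ∘ₗ (IsLocalRing.maximalIdeal R).mkQ with hθdef
    have hleθ : LinearMap.ker ts ≤ LinearMap.ker θ := by
      intro r hr
      rw [LinearMap.mem_ker, hθdef, LinearMap.comp_apply]
      have hz : (IsLocalRing.maximalIdeal R).mkQ r = 0 := by
        rw [Submodule.mkQ_apply, Submodule.Quotient.mk_eq_zero]
        exact hle hr
      rw [hz, map_zero]
    set h1 : (LinearMap.range ts) →ₗ[R] E :=
      (Submodule.liftQ (LinearMap.ker ts) θ hleθ) ∘ₗ
        (ts.quotKerEquivRange).symm.toLinearMap with hh1def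
    obtain ⟨ψ, hψ⟩ := hBE.extension_property (LinearMap.range ts).subtype
      Subtype.val_injective h1
    refine ⟨ψ ∘ₗ N'.mkQ, ?_, ?_⟩
    · intro s hs
      have h0 : N'.mkQ s = 0 := by
        rw [Submodule.mkQ_apply, Submodule.Quotient.mk_eq_zero]
        exact Submodule.mem_comap.mpr hs
      rw [LinearMap.comp_apply, h0, map_zero]
    · have hxbr : xb ∈ LinearMap.range ts := ⟨1, hts1⟩
      have e1 : ψ xb = h1 ⟨xb, hxbr⟩ := LinearMap.congr_fun hψ ⟨xb, hxbr⟩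
      have e2 : (⟨xb, hxbr⟩ : LinearMap.range ts) = ⟨ts 1, LinearMap.mem_range_self ts 1⟩ :=
        Subtype.ext hts1.symm
      have e3 : h1 ⟨xb, hxbr⟩ = θ 1 := by
        rw [e2, hh1def, LinearMap.comp_apply, LinearEquiv.coe_coe,
          LinearMap.quotKerEquivRange_symm_apply_image ts 1, Submodule.mkQ_apply,
          Submodule.liftQ_apply]
      have e4 : θ 1 ≠ 0 := by
        rw [hθdef, LinearMap.comp_apply]
        intro h0
        have hz : ((IsLocalRing.maximalIdeal R).mkQ 1 : R ⧸ IsLocalRing.maximalIdeal R) = 0 :=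
          hi (by rw [h0, map_zero])
        rw [Submodule.mkQ_apply, Submodule.Quotient.mk_eq_zero] at hz
        exact (Ideal.IsMaximal.ne_top (IsLocalRing.maximalIdeal.isMaximal R))
          (Ideal.eq_top_of_isUnit_mem _ hz isUnit_one)
      intro hcontra
      exact e4 ((e3.symm.trans e1.symm).trans hcontra)
  choose φ hφ0 hφne using hphi
  choose K hK using fun s : S => (hmemS s).mp s.2
  have hvanish : ∀ (s : S) (n : ℕ), K s ≤ n → φ n s = 0 := fun s n hn =>
    hφ0 n s (hmono hn (hK s))
  have haux : ∀ (s : S) (n : ℕ),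
      ((DFinsupp.mk (β := fun _ : ℕ => E) (Finset.range (K s))
        (fun j => φ j.1 s) : ⨁ _ : ℕ, E)) n = φ n s := by
    intro s n
    by_cases hn : n ∈ Finset.range (K s)
    · exact (DFinsupp.mk_apply).trans (dif_pos hn)
    · exact (DFinsupp.mk_apply).trans ((dif_neg hn).trans
        (hvanish s n (not_lt.mp fun hlt => hn (Finset.mem_range.mpr hlt))).symm)
  set f0 : S →ₗ[R] ⨁ _ : ℕ, E :=
    { toFun := fun s => (DFinsupp.mk (β := fun _ : ℕ => E) (Finset.range (K s))
        (fun j => φ j.1 s) : ⨁ _ : ℕ, E)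
      map_add' := fun a b => DFinsupp.ext fun n =>
        (haux (a + b) n).trans ((map_add (φ n) a b).trans
          ((DirectSum.add_apply _ _ n).trans
            (congrArg₂ (· + ·) (haux a n) (haux b n))).symm)
      map_smul' := fun r a => DFinsupp.ext fun n =>
        (haux (r • a) n).trans ((map_smul (φ n) r a).trans
          ((DirectSum.smul_apply r _ n).trans
            (congrArg (r • ·) (haux a n))).symm) } with hf0def
  obtain ⟨f, hf⟩ := hBD.extension_property S.subtype Subtype.val_injective f0
  refine ⟨f, ?_⟩
  rintro ⟨F, hF⟩
  obtain ⟨n, hn⟩ := Infinite.exists_notMem_finset F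
  have h1 : f (x n) = f0 ⟨x n, hxS n⟩ := LinearMap.congr_fun hf ⟨x n, hxS n⟩
  have h2 : f (x n) n = φ n ⟨x n, hxS n⟩ :=
    (congrArg (fun y : ⨁ _ : ℕ, E => y n) h1).trans (haux ⟨x n, hxS n⟩ n)
  exact hφne n (h2.symm.trans (hF (x n) n hn))
end

section
/- Let $R$ be a commutative noetherian local ring with maximal ideal $\mathfrak{m}$ and residue field injective hull $E$, and let $M$ be an $R$-module. If for every countable family $(E_i)_{i \ge 1}$ of copies of $E$, every $R$-linear map $M \to \bigoplus_i E_i$ factors through a finite sub-direct-sum, then $M$ is finitely generated. -/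
open DirectSum

universe u v w

section SmallAux

variable {R : Type u} [CommRing R]

/-- Smallness passes through extensions of modules. -/
lemma stmt14_small_of_submodule_quotient {X : Type w} [AddCommGroup X] [Module R X]
    (Y : Submodule R X) [Small.{v} Y] [Small.{v} (X ⧸ Y)] : Small.{v} X := by
  have hsec : ∀ q : X ⧸ Y, ∃ x : X, Y.mkQ x = q := Y.mkQ_surjective
  choose s hs using hsec
  have hinj : Function.Injective (fun x : X =>
      ((⟨x - s (Y.mkQ x), by
        have h0 : Y.mkQ (x - s (Y.mkQ x)) = 0 := by rw [map_sub, hs, sub_self]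
        have := LinearMap.mem_ker.mpr h0
        rwa [Submodule.ker_mkQ] at this⟩ : Y), Y.mkQ x)) := by
    intro a b hab
    simp only [Prod.mk.injEq, Subtype.mk.injEq] at hab
    obtain ⟨h1, h2⟩ := hab
    rw [h2] at h1
    exact sub_left_injective h1
  exact small_of_injective hinj

/-- A finitely generated module killed by an ideal `m` with small quotient `R⧸m` is small. -/
lemma stmt14_small_of_fg_torsion {X : Type w} [AddCommGroup X] [Module R X]
    (m : Ideal R) [Small.{v} (R ⧸ m)] (hfg : Module.Finite R X)
    (htor : ∀ c ∈ m, ∀ x : X, c • x = 0) : Small.{v} X := by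
  obtain ⟨S, hS⟩ := Module.finite_def.mp hfg
  classical
  have key : ∀ c c' : R, m.mkQ c = m.mkQ c' → ∀ x : X, c • x = c' • x := by
    intro c c' h x
    have hmem : c - c' ∈ m := by
      have h0 : m.mkQ (c - c') = 0 := by rw [map_sub, h, sub_self]
      have := LinearMap.mem_ker.mpr h0
      rwa [Submodule.ker_mkQ] at this
    have := htor _ hmem x
    rw [sub_smul, sub_eq_zero] at this
    exact this
  have hsurj : Function.Surjective (fun c : S → R ⧸ m =>
      ∑ y ∈ S.attach, (Quotient.out (c y)) • (y : X)) := by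
    intro x
    have hx : x ∈ Submodule.span R (S : Set X) := by rw [hS]; trivial
    obtain ⟨f, -, hf⟩ := Submodule.mem_span_finset.1 hx
    refine ⟨fun y => m.mkQ (f y), ?_⟩
    have : ∀ y ∈ S.attach, (Quotient.out (m.mkQ (f (y : X)))) • (y : X) = f y • (y : X) := by
      intro y _
      apply key
      show m.mkQ (Quotient.out (m.mkQ (f (y : X)))) = m.mkQ (f (y : X))
      rw [Submodule.mkQ_apply, Submodule.mkQ_apply]
      exact Quotient.out_eq _
    show (∑ y ∈ S.attach, Quotient.out (m.mkQ (f (y : X))) • (y : X)) = x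
    rw [Finset.sum_congr rfl this, Finset.sum_attach S (fun y => f y • y)]
    exact hf
  exact small_of_surjective hsurj

lemma stmt14_small_quotient_pow (m : Ideal R) [IsNoetherianRing R]
    [hsm : Small.{v} (R ⧸ m)] (n : ℕ) :
    Small.{v} (R ⧸ (m ^ n : Ideal R)) := by
  induction n with
  | zero =>
      rw [pow_zero, Ideal.one_eq_top]
      haveI : Subsingleton (R ⧸ (⊤ : Ideal R)) := Submodule.Quotient.subsingleton_iff.mpr rfl
      exact small_of_injective (α := R ⧸ (⊤ : Ideal R)) (β := PUnit.{v+1})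
        (f := fun _ => PUnit.unit) (Function.injective_of_subsingleton _)
  | succ n ih =>
      set Y : Submodule R (R ⧸ (m ^ (n+1) : Ideal R)) :=
        Submodule.map (m ^ (n+1) : Ideal R).mkQ (m ^ n : Ideal R) with hY
      have hle : (m ^ (n+1) : Ideal R) ≤ (m ^ n : Ideal R) :=
        Ideal.pow_le_pow_right (Nat.le_succ n)
      haveI hq : Small.{v} ((R ⧸ (m ^ (n+1) : Ideal R)) ⧸ Y) := by
        have e := Submodule.quotientQuotientEquivQuotient (m ^ (n+1) : Ideal R) (m ^ n) hle
        exact small_of_injective e.injective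
      haveI hYs : Small.{v} Y := by
        have hfg : Y.FG := (IsNoetherian.noetherian (m ^ n : Ideal R)).map _
        refine stmt14_small_of_fg_torsion m (Module.Finite.iff_fg.mpr hfg) ?_
        rintro c hc ⟨y, hy⟩
        obtain ⟨b, hb, rfl⟩ := hy
        ext
        show c • (m ^ (n+1) : Ideal R).mkQ b = 0
        rw [← map_smul, smul_eq_mul, Submodule.mkQ_apply, Submodule.Quotient.mk_eq_zero]
        rw [mul_comm, pow_succ]
        exact Ideal.mul_mem_mul hb hc
      exact stmt14_small_of_submodule_quotient Y

end SmallAux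

section TorsionAux

variable {R : Type u} [CommRing R] [IsLocalRing R]
  {E : Type v} [AddCommGroup E] [Module R E]

lemma stmt14_residue_smul (t : R) (ht : t ∈ IsLocalRing.maximalIdeal R)
    (w : R ⧸ IsLocalRing.maximalIdeal R) : t • w = 0 := by
  obtain ⟨b, rfl⟩ := Submodule.mkQ_surjective _ w
  rw [← map_smul, smul_eq_mul, Submodule.mkQ_apply, Submodule.Quotient.mk_eq_zero]
  exact Ideal.mul_mem_right b _ ht

/-- Every element of `E` is killed by a power of the maximal ideal. -/
lemma stmt14_E_torsion [IsNoetherianRing R]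
    (i : (R ⧸ IsLocalRing.maximalIdeal R) →ₗ[R] E)
    (hess : ∀ N : Submodule R E, N ≠ ⊥ → N ⊓ LinearMap.range i ≠ ⊥) (x : E) :
    ∃ n : ℕ, (IsLocalRing.maximalIdeal R) ^ n
      ≤ LinearMap.ker (LinearMap.toSpanSingleton R E x) := by
  set m := IsLocalRing.maximalIdeal R
  have hrad : m ≤ Ideal.radical (LinearMap.ker (LinearMap.toSpanSingleton R E x)) := by
    intro t ht
    rw [Ideal.mem_radical_iff]
    have step : ∃ kk : ℕ, t ^ kk • x = 0 := by
      by_contra hcon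
      push_neg at hcon
      set A : ℕ →o Ideal R :=
        ⟨fun k => LinearMap.ker (LinearMap.toSpanSingleton R E (t ^ k • x)), by
          apply monotone_nat_of_le_succ
          intro k c hc
          rw [LinearMap.mem_ker, LinearMap.toSpanSingleton_apply] at hc ⊢
          rw [pow_succ', mul_smul, smul_comm c t, hc, smul_zero]⟩ with hA
      obtain ⟨k, hk⟩ := monotone_stabilizes_iff_noetherian.mpr
        (inferInstance : IsNoetherian R R) A
      set y : E := t ^ k • x with hy
      have hyne : y ≠ 0 := hcon k
      have hbot : (R ∙ y) ≠ ⊥ := by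
        rwa [ne_eq, Submodule.span_singleton_eq_bot]
      obtain ⟨z, hz, hzne⟩ := Submodule.ne_bot_iff _ |>.1 (hess _ hbot)
      obtain ⟨hz1, hz2⟩ := Submodule.mem_inf.1 hz
      obtain ⟨c, rfl⟩ := Submodule.mem_span_singleton.1 hz1
      obtain ⟨w, hw⟩ := hz2
      have htz : t • (c • y) = 0 := by
        rw [← hw, ← map_smul, stmt14_residue_smul t ht, map_zero]
      have hmem : c ∈ A (k + 1) := by
        rw [hA]
        show c ∈ LinearMap.ker (LinearMap.toSpanSingleton R E (t ^ (k+1) • x))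
        rw [LinearMap.mem_ker, LinearMap.toSpanSingleton_apply]
        rw [pow_succ', mul_smul, ← hy, smul_comm c t]
        exact htz
      rw [← hk (k+1) (Nat.le_succ k)] at hmem
      have : c • y = 0 := by
        have := LinearMap.mem_ker.1 hmem
        rwa [LinearMap.toSpanSingleton_apply] at this
      exact hzne this
    obtain ⟨kk, hkk⟩ := step
    exact ⟨kk, by rwa [LinearMap.mem_ker, LinearMap.toSpanSingleton_apply]⟩
  exact Ideal.exists_pow_le_of_le_radical_of_fg hrad (IsNoetherian.noetherian m)

end TorsionAux

section BaerAux

variable {R : Type u} [CommRing R] [IsNoetherianRing R] [IsLocalRing R]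
  {E : Type v} [AddCommGroup E] [Module R E]

/-- Baer's criterion holds for `E`, in a universe-unrestricted form. -/
lemma stmt14_E_baer [Module.Injective R E]
    (i : (R ⧸ IsLocalRing.maximalIdeal R) →ₗ[R] E) (hi : Function.Injective i)
    (hess : ∀ N : Submodule R E, N ≠ ⊥ → N ⊓ LinearMap.range i ≠ ⊥) :
    Module.Baer R E := by
  classical
  intro I g
  have torall := fun x : E => stmt14_E_torsion i hess x
  haveI hsm1 : Small.{v} (R ⧸ IsLocalRing.maximalIdeal R) := small_of_injective hi
  set m := IsLocalRing.maximalIdeal R with hm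
  obtain ⟨S, hS⟩ := IsNoetherian.noetherian I
  choose nu hnu using torall
  set n : ℕ := S.attach.sup (fun s => nu (g ⟨s.1, hS ▸ Submodule.subset_span s.2⟩)) with hn
  -- uniform torsion on the image of g
  have key1 : ∀ (x : R), x ∈ Submodule.span R (S : Set R) →
      ∀ hxI : x ∈ I, ∀ c ∈ (m ^ n : Ideal R), c • g ⟨x, hxI⟩ = 0 := by
    intro x hx
    induction hx using Submodule.span_induction with
    | mem z hz =>
        intro hzI c hc
        have hle : nu (g ⟨z, hS ▸ Submodule.subset_span hz⟩) ≤ n :=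
          Finset.le_sup (f := fun s => nu (g ⟨s.1, hS ▸ Submodule.subset_span s.2⟩))
            (Finset.mem_attach S ⟨z, hz⟩)
        have hc' : c ∈ (m ^ nu (g ⟨z, hS ▸ Submodule.subset_span hz⟩) : Ideal R) :=
          Ideal.pow_le_pow_right hle hc
        have := hnu (g ⟨z, hS ▸ Submodule.subset_span hz⟩) hc'
        rw [LinearMap.mem_ker, LinearMap.toSpanSingleton_apply] at this
        exact this
    | zero =>
        intro hzI c hc
        have h0 : (⟨(0:R), hzI⟩ : I) = 0 := rfl
        rw [h0, map_zero, smul_zero]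
    | add x y hxm hym hx' hy' =>
        intro hzI c hc
        have hxI : x ∈ I := hS ▸ hxm
        have hyI : y ∈ I := hS ▸ hym
        have h0 : (⟨x + y, hzI⟩ : I) = ⟨x, hxI⟩ + ⟨y, hyI⟩ := rfl
        rw [h0, map_add, smul_add, hx' hxI c hc, hy' hyI c hc, add_zero]
    | smul a x hxm hx' =>
        intro hzI c hc
        have hxI : x ∈ I := hS ▸ hxm
        have h0 : (⟨a • x, hzI⟩ : I) = a • ⟨x, hxI⟩ := rfl
        rw [h0, map_smul, smul_comm, hx' hxI c hc, smul_zero]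
  -- Artin–Rees
  obtain ⟨k, hk⟩ := Ideal.exists_pow_inf_eq_pow_smul (R := R) (M := R) m I
  set N := n + k with hN
  have hAR : (m ^ N : Ideal R) • (⊤ : Submodule R R) ⊓ I
      = (m ^ n : Ideal R) • ((m ^ k : Ideal R) • (⊤ : Submodule R R) ⊓ I) := by
    have := hk N (by omega)
    rwa [hN, Nat.add_sub_cancel] at this
  have key2 : ∀ (x : R) (hx : x ∈ I), x ∈ (m ^ N : Ideal R) → g ⟨x, hx⟩ = 0 := by
    have hsub : ∀ x, x ∈ (m ^ n : Ideal R) • I → ∀ hx : x ∈ I, g ⟨x, hx⟩ = 0 := by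
      intro x hmem
      induction hmem using Submodule.smul_induction_on' with
      | smul r hr z hz =>
          intro hx
          have h0 : (⟨r • z, hx⟩ : I) = r • ⟨z, hz⟩ := rfl
          rw [h0, map_smul]
          exact key1 z (hS ▸ hz) hz r hr
      | add x hx y hy hx' hy' =>
          intro hmem
          have hxI : x ∈ I := Submodule.smul_le_right hx
          have hyI : y ∈ I := Submodule.smul_le_right hy
          have h0 : (⟨x + y, hmem⟩ : I) = ⟨x, hxI⟩ + ⟨y, hyI⟩ := rfl
          rw [h0, map_add, hx' hxI, hy' hyI, add_zero]
    intro x hx hxN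
    apply hsub x ?_ hx
    have h1 : x ∈ (m ^ N : Ideal R) • (⊤ : Submodule R R) ⊓ I := by
      refine Submodule.mem_inf.2 ⟨?_, hx⟩
      have := Submodule.smul_mem_smul hxN (Submodule.mem_top (x := (1:R)))
      simpa using this
    rw [hAR] at h1
    exact Submodule.smul_le.2 (fun r hr z hz => Submodule.smul_mem_smul hr
      (Submodule.mem_inf.1 hz).2) h1
  -- now pass to the small quotient R ⧸ m^N
  haveI hsm2 : Small.{v} (R ⧸ (m ^ N : Ideal R)) := stmt14_small_quotient_pow m N
  set π : R →ₗ[R] R ⧸ (m ^ N : Ideal R) := Submodule.mkQ (m ^ N : Ideal R) with hπ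
  set φ : I →ₗ[R] R ⧸ (m ^ N : Ideal R) := π.comp I.subtype with hφ
  have hker : LinearMap.ker φ ≤ LinearMap.ker g := by
    rintro ⟨z, hz⟩ h0
    rw [LinearMap.mem_ker] at h0 ⊢
    have hzN : z ∈ (m ^ N : Ideal R) := by
      have : π z = 0 := h0
      rwa [hπ, Submodule.mkQ_apply, Submodule.Quotient.mk_eq_zero] at this
    exact key2 z hz hzN
  haveI hsm3 : Small.{v} (LinearMap.range φ) :=
    small_of_injective (Subtype.val_injective (p := fun x => x ∈ LinearMap.range φ))
  set e₁ := (Shrink.linearEquiv R (LinearMap.range φ)).symm with he₁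
  set e₂ := (Shrink.linearEquiv R (R ⧸ (m ^ N : Ideal R))).symm with he₂
  set gbar : LinearMap.range φ →ₗ[R] E :=
    (Submodule.liftQ (LinearMap.ker φ) g hker).comp
      (LinearMap.quotKerEquivRange φ).symm.toLinearMap with hgbar
  set f' : Shrink.{v} (LinearMap.range φ) →ₗ[R] Shrink.{v} (R ⧸ (m ^ N : Ideal R)) :=
    e₂.toLinearMap ∘ₗ (LinearMap.range φ).subtype ∘ₗ e₁.symm.toLinearMap with hf'
  have hf'inj : Function.Injective f' := by
    simp only [hf', LinearMap.coe_comp, LinearEquiv.coe_coe]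
    exact e₂.injective.comp (Subtype.val_injective.comp e₁.symm.injective)
  obtain ⟨h, hh⟩ := Module.Injective.out f' hf'inj (gbar ∘ₗ e₁.symm.toLinearMap)
  refine ⟨h ∘ₗ e₂.toLinearMap ∘ₗ π, ?_⟩
  intro x hx
  have hmem : φ ⟨x, hx⟩ ∈ LinearMap.range φ := LinearMap.mem_range_self φ _
  have h1 : π x = (LinearMap.range φ).subtype ⟨φ ⟨x, hx⟩, hmem⟩ := rfl
  have h2 : h (e₂ (π x)) = gbar ⟨φ ⟨x, hx⟩, hmem⟩ := by
    have := hh (e₁ ⟨φ ⟨x, hx⟩, hmem⟩)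
    simp only [hf', LinearMap.coe_comp, LinearEquiv.coe_coe, Function.comp_apply,
      LinearEquiv.symm_apply_apply] at this
    rw [h1]
    exact this
  have h3 : gbar ⟨φ ⟨x, hx⟩, hmem⟩ = g ⟨x, hx⟩ := by
    rw [hgbar]
    simp only [LinearMap.coe_comp, LinearEquiv.coe_coe, Function.comp_apply]
    rw [LinearMap.quotKerEquivRange_symm_apply_image, Submodule.mkQ_apply,
      Submodule.liftQ_apply]
  show h (e₂ (π x)) = g ⟨x, hx⟩
  rw [h2, h3]

/-- Baer's criterion for a countable direct sum of copies of `E`. -/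
lemma stmt14_directSum_baer (hB : Module.Baer R E) : Module.Baer R (⨁ _ : ℕ, E) := by
  classical
  intro I g
  obtain ⟨S, hS⟩ := IsNoetherian.noetherian I
  set F : Finset ℕ := S.attach.biUnion
    (fun s => (g ⟨s.1, hS ▸ Submodule.subset_span s.2⟩).support) with hF
  -- coordinates outside F vanish on all of I
  have hvanish : ∀ j ∉ F, ∀ (x : R), x ∈ Submodule.span R (S : Set R) →
      ∀ hx : x ∈ I, g ⟨x, hx⟩ j = 0 := by
    intro j hj x hxspan
    induction hxspan using Submodule.span_induction with
    | mem z hz =>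
        intro hzI
        by_contra hne
        apply hj
        rw [hF, Finset.mem_biUnion]
        exact ⟨⟨z, hz⟩, Finset.mem_attach _ _, DFinsupp.mem_support_iff.2 hne⟩
    | zero =>
        intro hzI
        have h0 : (⟨(0:R), hzI⟩ : I) = 0 := rfl
        rw [h0, map_zero]; rfl
    | add x y hxm hym hx' hy' =>
        intro hzI
        have hxI : x ∈ I := hS ▸ hxm
        have hyI : y ∈ I := hS ▸ hym
        have h0 : (⟨x + y, hzI⟩ : I) = ⟨x, hxI⟩ + ⟨y, hyI⟩ := rfl
        rw [h0, map_add, DFinsupp.add_apply, hx' hxI, hy' hyI, add_zero]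
    | smul a x hxm hx' =>
        intro hzI
        have hxI : x ∈ I := hS ▸ hxm
        have h0 : (⟨a • x, hzI⟩ : I) = a • ⟨x, hxI⟩ := rfl
        rw [h0, map_smul, DFinsupp.smul_apply, hx' hxI, smul_zero]
  -- extend each coordinate map
  have hcomp : ∀ j : ℕ, ∃ hj : R →ₗ[R] E, ∀ (x : R) (hx : x ∈ I),
      hj x = (component R ℕ (fun _ => E) j).comp g ⟨x, hx⟩ := by
    intro j
    obtain ⟨hj, hhj⟩ := hB I ((component R ℕ (fun _ => E) j).comp g)
    exact ⟨hj, fun x hx => hhj x hx⟩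
  choose hj hhj using hcomp
  refine ⟨∑ j ∈ F, (lof R ℕ (fun _ => E) j).comp (hj j), ?_⟩
  intro x hx
  rw [LinearMap.sum_apply]
  have hxs : ∀ j ∈ F, (lof R ℕ (fun _ => E) j).comp (hj j) x
      = of (fun _ => E) j (g ⟨x, hx⟩ j) := by
    intro j _
    rw [LinearMap.comp_apply, hhj j x hx, lof_eq_of]
    rfl
  rw [Finset.sum_congr rfl hxs]
  -- now show   ∑ j ∈ F, of _ j (g x j) = g x
  have hsupp : (g ⟨x, hx⟩).support ⊆ F := by
    intro j hjs
    by_contra hj'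
    exact DFinsupp.mem_support_iff.1 hjs (hvanish j hj' x (hS ▸ hx) hx)
  conv_rhs => rw [← DirectSum.sum_support_of (g ⟨x, hx⟩)]
  symm
  apply Finset.sum_subset hsupp
  intro j _ hjn
  rw [DFinsupp.notMem_support_iff.1 hjn, map_zero]

/-- Nonzero elements of arbitrary modules are detected by maps into `E`. -/
lemma stmt14_exists_hom_ne_zero
    (i : (R ⧸ IsLocalRing.maximalIdeal R) →ₗ[R] E) (hi : Function.Injective i)
    (hB : Module.Baer R E) {X : Type w} [AddCommGroup X] [Module R X]
    (ξ : X) (hξ : ξ ≠ 0) : ∃ u : X →ₗ[R] E, u ξ ≠ 0 := by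
  have hm : (IsLocalRing.maximalIdeal R) ≠ ⊤ := Ideal.IsMaximal.ne_top inferInstance
  set φ : R →ₗ[R] X := LinearMap.toSpanSingleton R X ξ with hφ
  set K := LinearMap.ker φ with hK
  have hKm : K ≤ IsLocalRing.maximalIdeal R := by
    apply IsLocalRing.le_maximalIdeal
    intro htop
    apply hξ
    have : (1:R) ∈ K := htop ▸ Submodule.mem_top
    have := LinearMap.mem_ker.1 this
    rwa [hφ, LinearMap.toSpanSingleton_apply, one_smul] at this
  set ψ : R →ₗ[R] E := i.comp (Submodule.mkQ (IsLocalRing.maximalIdeal R)) with hψ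
  have hKψ : K ≤ LinearMap.ker ψ := by
    intro z hz
    rw [LinearMap.mem_ker, hψ, LinearMap.comp_apply, Submodule.mkQ_apply]
    have : Submodule.Quotient.mk (p := IsLocalRing.maximalIdeal R) z = 0 :=
      (Submodule.Quotient.mk_eq_zero (IsLocalRing.maximalIdeal R)).2 (hKm hz)
    rw [this, map_zero]
  set ψ' : (R ⧸ K) →ₗ[R] E := Submodule.liftQ K ψ hKψ with hψ'
  set φ' : (R ⧸ K) →ₗ[R] X := Submodule.liftQ K φ (le_refl K) with hφ'
  have hφ'inj : Function.Injective φ' := by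
    rw [← LinearMap.ker_eq_bot, hφ', Submodule.ker_liftQ_eq_bot]
    exact le_refl K
  obtain ⟨u, hu⟩ := hB.extension_property φ' hφ'inj ψ'
  refine ⟨u, ?_⟩
  have h1 : ξ = φ' (Submodule.Quotient.mk 1) := by
    rw [hφ', Submodule.liftQ_apply, hφ, LinearMap.toSpanSingleton_apply, one_smul]
  rw [h1, ← LinearMap.comp_apply, hu, hψ', Submodule.liftQ_apply, hψ, LinearMap.comp_apply,
    Submodule.mkQ_apply]
  intro h0
  rw [← map_zero i] at h0
  have h2 := hi h0
  rw [Submodule.Quotient.mk_eq_zero] at h2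
  exact hm ((Ideal.eq_top_iff_one _).2 h2)

/-- The main argument, phrased with Baer hypotheses. -/
theorem stmt14_main
    (i : (R ⧸ IsLocalRing.maximalIdeal R) →ₗ[R] E) (hi : Function.Injective i)
    (hB : Module.Baer R E)
    (M : Type w) [AddCommGroup M] [Module R M]
    (hfac : ∀ f : M →ₗ[R] ⨁ _ : ℕ, E,
      ∃ F : Finset ℕ, ∀ (x : M) (j : ℕ), j ∉ F → f x j = 0) :
    Module.Finite R M := by
  classical
  by_contra hfin
  -- a strictly increasing chain of f.g. submodules
  have hex : ∀ p : Submodule R M, p.FG → ∃ y : M, y ∉ p := by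
    intro p hp
    by_contra hcon
    push_neg at hcon
    apply hfin
    rw [Module.finite_def]
    have : p = ⊤ := Submodule.eq_top_iff'.2 hcon
    rwa [this] at hp
  let step : {p : Submodule R M // p.FG} → {p : Submodule R M // p.FG} :=
    fun p => ⟨p.1 ⊔ (R ∙ (hex p.1 p.2).choose), p.2.sup (Submodule.fg_span_singleton _)⟩
  let P : ℕ → {p : Submodule R M // p.FG} := fun n => step^[n] ⟨⊥, Submodule.fg_bot⟩
  have hPsucc : ∀ n, P (n+1) = step (P n) := fun n => Function.iterate_succ_apply' _ _ _
  have hPmono : Monotone (fun n => (P n).1) := by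
    apply monotone_nat_of_le_succ
    intro n
    rw [hPsucc n]
    exact le_sup_left
  set x : ℕ → M := fun n => (hex (P n).1 (P n).2).choose with hx
  have hxnot : ∀ n, x n ∉ (P n).1 := fun n => (hex (P n).1 (P n).2).choose_spec
  have hxin : ∀ n, x n ∈ (P (n+1)).1 := by
    intro n
    rw [hPsucc n]
    exact Submodule.mem_sup_right (Submodule.mem_span_singleton_self _)
  set Ninf : Submodule R M := ⨆ n, (P n).1 with hNinf
  have hmem : ∀ z : Ninf, ∃ k, (z : M) ∈ (P k).1 := by
    intro z
    exact (Submodule.mem_iSup_of_chain ⟨fun n => (P n).1, hPmono⟩ (z : M)).1 z.2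
  -- maps detecting each x n
  have hg : ∀ n : ℕ, ∃ gn : M →ₗ[R] E, (∀ z ∈ (P n).1, gn z = 0) ∧ gn (x n) ≠ 0 := by
    intro n
    have hne : Submodule.Quotient.mk (p := (P n).1) (x n) ≠ 0 := by
      rw [ne_eq, Submodule.Quotient.mk_eq_zero]
      exact hxnot n
    obtain ⟨u, hu⟩ := stmt14_exists_hom_ne_zero i hi hB _ hne
    refine ⟨u.comp ((P n).1.mkQ), ?_, ?_⟩
    · intro z hz
      rw [LinearMap.comp_apply, Submodule.mkQ_apply]
      rw [(Submodule.Quotient.mk_eq_zero _).2 hz, map_zero]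
    · exact hu
  choose gn hgn0 hgnne using hg
  -- the map from Ninf to the direct sum
  have claim : ∀ (z : Ninf) (j : ℕ),
      (DFinsupp.mk (β := fun _ : ℕ => E) (Finset.range (hmem z).choose)
        (fun q => gn q ((z : M)))) j = gn j (z : M) := by
    intro z j
    rw [DFinsupp.mk_apply]
    split
    · rfl
    · rename_i hj
      rw [Finset.mem_range, not_lt] at hj
      symm
      apply hgn0
      exact hPmono hj (hmem z).choose_spec
  set f0 : Ninf → ⨁ _ : ℕ, E := fun z =>
    DFinsupp.mk (Finset.range (hmem z).choose) (fun q => gn q ((z : M))) with hf0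
  have hf0apply : ∀ (z : Ninf) (j : ℕ), f0 z j = gn j (z : M) := claim
  set f : Ninf →ₗ[R] ⨁ _ : ℕ, E :=
    { toFun := f0
      map_add' := by
        intro a b
        refine DFunLike.ext _ _ fun j => ?_
        rw [DFinsupp.add_apply, hf0apply, hf0apply, hf0apply, Submodule.coe_add, map_add]
      map_smul' := by
        intro c a
        refine DFunLike.ext _ _ fun j => ?_
        rw [RingHom.id_apply, DFinsupp.smul_apply, hf0apply, hf0apply, Submodule.coe_smul,
          map_smul] } with hf
  -- extend it to M
  obtain ⟨Fbig, hFbig⟩ := (stmt14_directSum_baer hB).extension_property Ninf.subtype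
    (Submodule.injective_subtype Ninf) f
  obtain ⟨Fin, hFin⟩ := hfac Fbig
  obtain ⟨n, hn⟩ := Infinite.exists_notMem_finset Fin
  have hxN : x n ∈ Ninf := by
    show x n ∈ ⨆ k, (P k).1
    exact Submodule.mem_iSup_of_chain ⟨fun k => (P k).1, hPmono⟩ (x n) |>.2 ⟨n+1, hxin n⟩
  have h1 : Fbig (x n) = f ⟨x n, hxN⟩ := by
    have := congrArg (fun (F : Ninf →ₗ[R] ⨁ _ : ℕ, E) => F ⟨x n, hxN⟩) hFbig
    exact this
  have h2 : Fbig (x n) n = 0 := hFin (x n) n hn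
  rw [h1] at h2
  have h3 : f ⟨x n, hxN⟩ n = gn n (x n) := hf0apply ⟨x n, hxN⟩ n
  rw [h3] at h2
  exact hgnne n h2

end BaerAux

/-- Over a commutative noetherian local ring with residue field injective hull
`E`: if every map from `M` to a countable direct sum of copies of `E` factors
through a finite sub-direct-sum, then `M` is finitely generated. -/
theorem stmt_14 {R : Type*} [CommRing R] [IsNoetherianRing R] [IsLocalRing R]
    {E : Type*} [AddCommGroup E] [Module R E] [Module.Injective R E]
    (i : (R ⧸ IsLocalRing.maximalIdeal R) →ₗ[R] E) (hi : Function.Injective i)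
    (hess : ∀ N : Submodule R E, N ≠ ⊥ → N ⊓ LinearMap.range i ≠ ⊥)
    (M : Type*) [AddCommGroup M] [Module R M]
    (hfac : ∀ f : M →ₗ[R] ⨁ _ : ℕ, E,
      ∃ F : Finset ℕ, ∀ (x : M) (j : ℕ), j ∉ F → f x j = 0) :
    Module.Finite R M :=
  stmt14_main i hi (stmt14_E_baer i hi hess) M hfac
end

section
/- Let $R$ be a commutative noetherian ring, $M$ a module with a strictly increasing chain of submodules $0 = N_0 \subsetneq N_1 \subsetneq \cdots$, and suppose for each $i \ge 1$ there is an injective module $I_i$ and a nonzero map $f_i \colon N_i \to I_i$ with $f_i|_{N_{i-1}} = 0$. Then there exists an $R$-linear map $f \colon M \to \bigoplus_{i \ge 1} I_i$ whose restriction to $N := \bigcup_i N_i$ has $i$-th component extending $f_i$, and $f$ does not factor through any finite sub-direct-sum of $\bigoplus_i I_i$. -/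
open DirectSum


universe u v w

open DirectSum

namespace Stmt15

variable {R : Type u} [CommRing R]

/-- If `π : Y → Z` is surjective with small kernel and small codomain, then `Y` is small. -/
lemma small_extension {Y : Type*} {Z : Type*} [AddCommGroup Y] [AddCommGroup Z]
    [Module R Y] [Module R Z] (π : Y →ₗ[R] Z) (hs : Function.Surjective π)
    [Small.{v} Z] [Small.{v} (LinearMap.ker π)] : Small.{v} Y := by
  have hinj : Function.Injective (fun y : Y =>
      ((π y, ⟨y - Function.surjInv hs (π y), by
        simp [LinearMap.mem_ker, Function.surjInv_eq hs]⟩) : Z × LinearMap.ker π)) := by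
    intro y y' h
    have h1 : π y = π y' := (Prod.ext_iff.mp h).1
    have h2 := (Prod.ext_iff.mp h).2
    have h3 : y - Function.surjInv hs (π y) = y' - Function.surjInv hs (π y') :=
      congrArg Subtype.val h2
    rw [h1] at h3
    exact sub_left_inj.mp h3
  exact small_of_injective hinj

end Stmt15

namespace Stmt15

variable {R : Type u} [CommRing R]

/-- Over a noetherian ring, a quotient `R ⧸ q` is small whenever `R ⧸ q.radical` is. -/
lemma small_quotient_of_small_quotient_radical [IsNoetherianRing R] (q : Ideal R)
    (hrad : Small.{v} (R ⧸ q.radical)) : Small.{v} (R ⧸ q) := by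
  classical
  obtain ⟨n, hn⟩ := Ideal.exists_radical_pow_le_of_fg q (IsNoetherian.noetherian _)
  have key : ∀ m : ℕ, Small.{v} (R ⧸ (q ⊔ q.radical ^ (m + 1))) := by
    intro m
    induction m with
    | zero =>
      have h1 : q ⊔ q.radical ^ (0 + 1) = q.radical := by
        rw [pow_one]
        exact sup_eq_right.mpr q.le_radical
      exact small_of_injective (Submodule.quotEquivOfEq _ _ h1).injective
    | succ m ih =>
      set B : Ideal R := q ⊔ q.radical ^ (m + 1) with hB
      set B' : Ideal R := q ⊔ q.radical ^ (m + 2) with hB'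
      have hle : B' ≤ B := sup_le_sup_left (Ideal.pow_le_pow_right (by omega)) q
      set π : (R ⧸ B') →ₗ[R] (R ⧸ B) := Submodule.mapQ B' B LinearMap.id hle with hπ
      have hπmk : ∀ x : R, π (Submodule.Quotient.mk x) = Submodule.Quotient.mk x := by
        intro x
        erw [Submodule.mapQ_apply]
        rfl
      have hsurj : Function.Surjective π := by
        intro y
        obtain ⟨x, rfl⟩ := Submodule.Quotient.mk_surjective _ y
        exact ⟨Submodule.Quotient.mk x, hπmk x⟩
      have hkermem : ∀ x : R, (Submodule.Quotient.mk x : R ⧸ B') ∈ LinearMap.ker π ↔ x ∈ B := by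
        intro x
        rw [LinearMap.mem_ker, hπmk, Submodule.Quotient.mk_eq_zero]
      -- small kernel
      obtain ⟨T, hT⟩ := IsNoetherian.noetherian (q.radical ^ (m + 1))
      have hTmem : ∀ i : R, i ∈ T → i ∈ B := fun i hi =>
        Submodule.mem_sup_right (hT ▸ Submodule.subset_span hi)
      have hker_small : Small.{v} (LinearMap.ker π) := by
        set Φ : ((↥(T : Finset R)) → (R ⧸ q.radical)) → LinearMap.ker π := fun c =>
          ⟨Submodule.Quotient.mk (∑ i ∈ T.attach, (c i).out * (i : R)), by
            rw [hkermem]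
            exact Submodule.sum_mem _ fun i _ => B.mul_mem_left _ (hTmem i i.2)⟩ with hΦ
        refine small_of_surjective (f := Φ) ?_
        rintro ⟨y, hy⟩
        obtain ⟨x, rfl⟩ := Submodule.Quotient.mk_surjective _ y
        have hxB : x ∈ B := (hkermem x).mp hy
        obtain ⟨u, hu, v, hv, rfl⟩ := Submodule.mem_sup.mp hxB
        rw [← hT] at hv
        obtain ⟨f, -, hf⟩ := Submodule.mem_span_finset.mp hv
        refine ⟨fun i => Submodule.Quotient.mk (f i), ?_⟩
        apply Subtype.ext
        show Submodule.Quotient.mk _ = Submodule.Quotient.mk (u + v)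
        rw [Submodule.Quotient.eq]
        have hv' : v = ∑ i ∈ T.attach, f (i : R) * (i : R) := by
          rw [Finset.sum_attach T (fun i => f i * i), ← hf]
          simp [smul_eq_mul]
        have hdiff : (∑ i ∈ T.attach,
            (Quotient.out (Submodule.Quotient.mk (f (i : R)) : R ⧸ q.radical)) * (i : R)) - v
            ∈ q.radical ^ (m + 2) := by
          rw [hv', ← Finset.sum_sub_distrib]
          refine Submodule.sum_mem _ fun i _ => ?_
          rw [← sub_mul]
          have h1 : (Quotient.out (Submodule.Quotient.mk (f (i : R)) : R ⧸ q.radical)) - f (i : R)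
              ∈ q.radical := by
            rw [← Submodule.Quotient.eq]
            exact Quotient.out_eq' _
          have h2 : (i : R) ∈ q.radical ^ (m + 1) := hT ▸ Submodule.subset_span i.2
          have h3 := Ideal.mul_mem_mul h1 h2
          rwa [← pow_succ'] at h3
        have heq : (∑ i ∈ T.attach,
            (Quotient.out (Submodule.Quotient.mk (f (i : R)) : R ⧸ q.radical)) * (i : R)) - (u + v)
            = ((∑ i ∈ T.attach,
            (Quotient.out (Submodule.Quotient.mk (f (i : R)) : R ⧸ q.radical)) * (i : R)) - v) - u := by
          ring
        rw [heq]
        exact Submodule.sub_mem _ (Submodule.mem_sup_right hdiff) (Submodule.mem_sup_left hu)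
      exact small_extension π hsurj
  have hfin : q ⊔ q.radical ^ (n + 1) = q := by
    refine sup_eq_left.mpr (le_trans (Ideal.pow_le_pow_right (by omega)) hn)
  exact hfin ▸ key n

end Stmt15

namespace Stmt15

variable {R : Type u} [CommRing R]

theorem baer_of_injective [IsNoetherianRing R] (Q : Type v) [AddCommGroup Q] [Module R Q]
    [Module.Injective R Q] : Module.Baer R Q := by
  classical
  intro J g
  set K : Ideal R := (LinearMap.ker g).map J.subtype with hK
  have hKJ : K ≤ J := by rintro x ⟨y, hy, rfl⟩; exact y.2
  have hKg : ∀ (x : R) (hx : x ∈ J), x ∈ K ↔ g ⟨x, hx⟩ = 0 := by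
    intro x hx
    constructor
    · rintro ⟨y, hy, rfl⟩
      have heq : (⟨J.subtype y, hx⟩ : ↥J) = y := Subtype.ext rfl
      rw [heq]
      exact hy
    · intro h
      exact ⟨⟨x, hx⟩, h, rfl⟩
  -- Zorn: maximal A with K ≤ A and A ⊓ J ≤ K
  obtain ⟨A, hKA, hAmem, hAmax⟩ :
      ∃ A : Ideal R, K ≤ A ∧ (K ≤ A ∧ A ⊓ J ≤ K) ∧
        ∀ B : Ideal R, (K ≤ B ∧ B ⊓ J ≤ K) → A ≤ B → B ≤ A := by
    obtain ⟨A, hKA, hAmax⟩ := zorn_le_nonempty₀ {A : Ideal R | K ≤ A ∧ A ⊓ J ≤ K}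
      (fun c hc hchain y hy => by
        refine ⟨sSup c, ⟨?_, ?_⟩, fun z hz => le_sSup hz⟩
        · exact (hc hy).1.trans (le_sSup hy)
        · rintro x ⟨hx1, hx2⟩
          obtain ⟨B, hBc, hxB⟩ := (Submodule.mem_sSup_of_directed ⟨y, hy⟩
            (hchain.directedOn)).mp hx1
          exact (hc hBc).2 ⟨hxB, hx2⟩) K ⟨le_rfl, inf_le_left⟩
    exact ⟨A, hKA, hAmax.prop, fun B hB hAB => hAmax.2 hB hAB⟩
  have hAJK : A ⊓ J = K := le_antisymm hAmem.2 (le_inf hKA hKJ)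
  -- essentiality
  have ess : ∀ x : R, x ∉ A → ∃ (r j a : R), j ∈ J ∧ j ∉ K ∧ a ∈ A ∧ j = a + r * x := by
    intro x hx
    have hnle : ¬ ((A ⊔ Ideal.span {x}) ⊓ J ≤ K) := by
      intro hle
      have hBA : A ⊔ Ideal.span {x} ≤ A :=
        hAmax _ ⟨hKA.trans le_sup_left, hle⟩ le_sup_left
      exact hx (hBA (Submodule.mem_sup_right (Ideal.mem_span_singleton_self x)))
    obtain ⟨j, hj, hjK⟩ := SetLike.not_le_iff_exists.mp hnle
    obtain ⟨hjB, hjJ⟩ := Submodule.mem_inf.mp hj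
    obtain ⟨a, ha, t, ht, rfl⟩ := Submodule.mem_sup.mp hjB
    obtain ⟨r, rfl⟩ := Ideal.mem_span_singleton'.mp ht
    exact ⟨r, a + r * x, a, hjJ, hjK, ha, rfl⟩
  -- smallness of R ⧸ p for suitable primes
  have smallp : ∀ p : Ideal R, p.IsPrime →
      (∃ z : R, z ∉ A ∧ p = A.colon (Ideal.span {z})) → Small.{v} (R ⧸ p) := by
    rintro p hp ⟨z, hzA, rfl⟩
    obtain ⟨r, j, a, hjJ, hjK, haA, hje⟩ := ess z hzA
    have hrz : r * z ∉ A := by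
      intro h
      refine hjK ?_
      rw [← hAJK]
      refine Submodule.mem_inf.mpr ⟨?_, hjJ⟩
      rw [hje]
      exact A.add_mem haA h
    have hrp : r ∉ A.colon (Ideal.span {z}) := fun h => hrz (Ideal.mem_colon_span_singleton.mp h)
    set θ : R →ₗ[R] Q := g ∘ₗ LinearMap.toSpanSingleton R (↥J) ⟨j, hjJ⟩ with hθdef
    have hθ : ∀ s : R, θ s = g ⟨s * j, J.mul_mem_left s hjJ⟩ := by
      intro s
      show g (s • (⟨j, hjJ⟩ : ↥J)) = _
      congr 1
    have hker : LinearMap.ker θ = A.colon (Ideal.span {z}) := by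
      ext s
      rw [LinearMap.mem_ker, hθ s]
      constructor
      · intro hs
        have h1 : s * j ∈ K := (hKg _ (J.mul_mem_left s hjJ)).mpr hs
        have h2 : s * j ∈ A := hKA h1
        have h3 : s * (r * z) ∈ A := by
          have heq : s * (r * z) = s * j - s * a := by rw [hje]; ring
          rw [heq]
          exact A.sub_mem h2 (A.mul_mem_left s haA)
        have h4 : s * r ∈ A.colon (Ideal.span {z}) :=
          Ideal.mem_colon_span_singleton.mpr (by rw [mul_assoc]; exact h3)
        rcases hp.mem_or_mem h4 with h | h
        · exact h
        · exact absurd h hrp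
      · intro hs
        have h1 : s * (r * z) ∈ A := by
          rw [← mul_assoc]
          exact Ideal.mem_colon_span_singleton.mp ((A.colon (Ideal.span {z})).mul_mem_right r hs)
        have h2 : s * j ∈ A := by
          have heq : s * j = s * a + s * (r * z) := by rw [hje]; ring
          rw [heq]
          exact A.add_mem (A.mul_mem_left s haA) h1
        have h3 : s * j ∈ K := by
          rw [← hAJK]
          exact Submodule.mem_inf.mpr ⟨h2, J.mul_mem_left s hjJ⟩
        exact (hKg _ (J.mul_mem_left s hjJ)).mp h3
    haveI hrange_small : Small.{v} (LinearMap.range θ) :=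
      small_of_injective (f := fun x : LinearMap.range θ => (x : Q)) Subtype.val_injective
    exact small_of_injective ((Submodule.quotEquivOfEq _ _ hker.symm).trans
      θ.quotKerEquivRange).injective
  -- smallness of R ⧸ A via Lasker decomposition
  have smallA : Small.{v} (R ⧸ A) := by
    obtain ⟨t, htinf, htprim, htrad, htirred⟩ := Ideal.IsLasker.minimal (Ideal.isLasker R R) A
    have hsmallq : ∀ q : Ideal R, q ∈ t → Small.{v} (R ⧸ q) := by
      intro q hq
      have hprimary : q.IsPrimary := htprim hq
      have hAq : A ≤ q := htinf ▸ Finset.inf_le hq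
      obtain ⟨x, hxmem, hxq⟩ : ∃ x, x ∈ (t.erase q).inf id ∧ x ∉ q :=
        SetLike.not_le_iff_exists.mp (htirred hq)
      have hex : ∃ n, q.radical ^ n * Ideal.span {x} ≤ q := by
        obtain ⟨n, hn⟩ := Ideal.exists_radical_pow_le_of_fg q (IsNoetherian.noetherian _)
        exact ⟨n, le_trans Ideal.mul_le_left hn⟩
      set k := Nat.find hex with hkdef
      have hk : q.radical ^ k * Ideal.span {x} ≤ q := Nat.find_spec hex
      have hk0 : k ≠ 0 := by
        intro h
        rw [h, pow_zero, one_mul] at hk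
        exact hxq (hk (Ideal.mem_span_singleton_self x))
      have hklt : ¬ (q.radical ^ (k - 1) * Ideal.span {x} ≤ q) := Nat.find_min hex (by omega)
      obtain ⟨z, hzmem, hzq⟩ := SetLike.not_le_iff_exists.mp hklt
      have hzA : z ∉ A := fun h => hzq (hAq h)
      have hzx : z ∈ Ideal.span {x} := Ideal.mul_le_right hzmem
      have hcolon : A.colon (Ideal.span {z}) = q.radical := by
        apply le_antisymm
        · intro s hs
          have h1 : s * z ∈ A := Ideal.mem_colon_span_singleton.mp hs
          have h2 : z * s ∈ q := by rw [mul_comm]; exact hAq h1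
          rcases (Ideal.isPrimary_iff.mp hprimary).2 h2 with h | h
          · exact absurd h hzq
          · exact h
        · intro s hs
          refine Ideal.mem_colon_span_singleton.mpr ?_
          rw [← htinf, Submodule.mem_finsetInf]
          intro q' hq'
          by_cases hqq : q' = q
          · subst hqq
            have h5 := Ideal.mul_mem_mul hs hzmem
            rw [← mul_assoc, ← pow_succ'] at h5
            have hkk : k - 1 + 1 = k := by omega
            rw [hkk] at h5
            show s * z ∈ q'
            exact hk h5
          · show s * z ∈ q'
            have h6 : x ∈ q' := by
              have h := Finset.inf_le (f := id) (Finset.mem_erase.mpr ⟨hqq, hq'⟩)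
              exact h hxmem
            have h7 : z ∈ q' := (Ideal.span_singleton_le_iff_mem q').mpr h6 hzx
            exact Ideal.mul_mem_left _ s h7
      have hradsmall : Small.{v} (R ⧸ q.radical) :=
        smallp _ (Ideal.isPrime_radical hprimary) ⟨z, hzA, hcolon.symm⟩
      exact small_quotient_of_small_quotient_radical q hradsmall
    have hkerpi : ∀ x : R, (LinearMap.pi fun q : ↥t => Submodule.mkQ (q : Ideal R)) x = 0 ↔
        x ∈ A := by
      intro x
      rw [← htinf]
      constructor
      · intro hx
        rw [Submodule.mem_finsetInf]
        intro q hq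
        have := congrFun hx ⟨q, hq⟩
        simpa [Submodule.mkQ_apply, Ideal.Quotient.eq_zero_iff_mem] using this
      · intro hx
        funext q
        have : x ∈ (q : Ideal R) := Submodule.mem_finsetInf.mp hx _ q.2
        simpa [Submodule.mkQ_apply, Ideal.Quotient.eq_zero_iff_mem] using this
    set Φ : (R ⧸ A) →ₗ[R] (∀ q : ↥t, R ⧸ (q : Ideal R)) :=
      Submodule.liftQ A (LinearMap.pi fun q : ↥t => Submodule.mkQ (q : Ideal R))
        (fun x hx => by rw [LinearMap.mem_ker, hkerpi]; exact hx) with hΦdef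
    have hΦinj : Function.Injective Φ := by
      rw [← LinearMap.ker_eq_bot]
      exact Submodule.ker_liftQ_eq_bot _ _ _ (fun x hx => by
        rw [LinearMap.mem_ker] at hx; exact (hkerpi x).mp hx)
    haveI : ∀ q : ↥t, Small.{v} (R ⧸ (q : Ideal R)) := fun q => hsmallq q q.2
    exact small_of_injective hΦinj
  -- pushout construction
  haveI := smallA
  set ρ : ↥J →ₗ[R] Q × (R ⧸ A) := LinearMap.prod (-g) (A.mkQ ∘ₗ J.subtype) with hρ
  set L : Submodule R (Q × (R ⧸ A)) := LinearMap.range ρ with hL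
  set ιQ : Q →ₗ[R] (Q × (R ⧸ A)) ⧸ L := L.mkQ ∘ₗ LinearMap.inl R Q (R ⧸ A) with hι
  have hιQ : ∀ q : Q, ιQ q = L.mkQ (q, 0) := fun q => rfl
  have hιinj : Function.Injective ιQ := by
    intro q1 q2 hq
    have h0 : ιQ (q1 - q2) = 0 := by rw [map_sub, hq, sub_self]
    have hmem : ((q1 - q2, 0) : Q × (R ⧸ A)) ∈ L := by
      rw [hιQ, Submodule.mkQ_apply] at h0
      rwa [Submodule.Quotient.mk_eq_zero] at h0
    obtain ⟨y, hy⟩ := hmem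
    have h2 : ((y : R)) ∈ A := by
      have := congrArg Prod.snd hy
      simpa [hρ, Submodule.mkQ_apply, Ideal.Quotient.eq_zero_iff_mem] using this
    have h3 : (y : R) ∈ K := by
      rw [← hAJK]; exact Submodule.mem_inf.mpr ⟨h2, y.2⟩
    have h4 : g y = 0 := by
      have h5 := (hKg _ y.2).mp h3
      have heq : (⟨(y : R), y.2⟩ : ↥J) = y := Subtype.ext rfl
      rwa [heq] at h5
    have h6 : q1 - q2 = -(g y) := by
      have := congrArg Prod.fst hy
      simpa [hρ] using this.symm
    rw [h4, neg_zero] at h6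
    exact sub_eq_zero.mp h6
  haveI smallY : Small.{v} ((Q × (R ⧸ A)) ⧸ L) :=
    small_of_surjective (Submodule.Quotient.mk_surjective L)
  set e := Shrink.linearEquiv.{v} R ((Q × (R ⧸ A)) ⧸ L) with he
  obtain ⟨h, hh⟩ := Module.Injective.out (e.symm.toLinearMap ∘ₗ ιQ)
    ((e.symm.injective).comp hιinj) (LinearMap.id (R := R) (M := Q))
  set c : Q := h (e.symm (L.mkQ (0, Submodule.Quotient.mk 1))) with hc
  refine ⟨LinearMap.toSpanSingleton R Q c, ?_⟩
  intro x hx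
  show x • c = g ⟨x, hx⟩
  have e1 : x • (L.mkQ ((0 : Q), (Submodule.Quotient.mk 1 : R ⧸ A)))
      = L.mkQ (0, Submodule.Quotient.mk x) := by
    rw [← map_smul]
    congr 1
    ext
    · simp
    · show x • (Submodule.Quotient.mk 1 : R ⧸ A) = Submodule.Quotient.mk x
      rw [← Submodule.Quotient.mk_smul]
      norm_num
  have e2 : L.mkQ ((0 : Q), (Submodule.Quotient.mk x : R ⧸ A)) = ιQ (g ⟨x, hx⟩) := by
    rw [hιQ, Submodule.mkQ_apply, Submodule.mkQ_apply, Submodule.Quotient.eq]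
    refine ⟨⟨x, hx⟩, ?_⟩
    have : ρ ⟨x, hx⟩ = (-(g ⟨x, hx⟩), Submodule.Quotient.mk x) := rfl
    rw [this]
    ext
    · simp
    · simp
  calc x • c = h (e.symm (x • L.mkQ (0, Submodule.Quotient.mk 1))) := by
        rw [hc, ← map_smul, ← map_smul]
    _ = h (e.symm (ιQ (g ⟨x, hx⟩))) := by rw [e1, e2]
    _ = g ⟨x, hx⟩ := hh (g ⟨x, hx⟩)

end Stmt15

namespace Stmt15

variable {R : Type u} [CommRing R]

theorem baer_directSum [IsNoetherianRing R] {ι : Type w} [DecidableEq ι] {I : ι → Type v}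
    [∀ i, AddCommGroup (I i)] [∀ i, Module R (I i)] (hI : ∀ i, Module.Baer R (I i)) :
    Module.Baer R (⨁ i, I i) := by
  classical
  intro J g
  obtain ⟨sgen, hsgen⟩ := IsNoetherian.noetherian J
  set T : Finset ι := sgen.attach.biUnion
    (fun r => (g ⟨r.1, hsgen ▸ Submodule.subset_span r.2⟩).support) with hT
  have hcomp : ∀ (m : ι), m ∉ T → ∀ x : ↥J, (g x) m = 0 := by
    intro m hm x
    set gm : ↥J →ₗ[R] I m := (DirectSum.component R ι I m).comp g with hgm
    have hle : Submodule.span R (↑sgen : Set R) ≤ (LinearMap.ker gm).map J.subtype := by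
      rw [Submodule.span_le]
      intro r hr
      refine ⟨⟨r, hsgen ▸ Submodule.subset_span hr⟩, ?_, rfl⟩
      rw [SetLike.mem_coe, LinearMap.mem_ker]
      have hm' : m ∉ (g ⟨r, hsgen ▸ Submodule.subset_span hr⟩).support := by
        intro hmem
        exact hm (Finset.mem_biUnion.mpr ⟨⟨r, hr⟩, Finset.mem_attach _ _, hmem⟩)
      exact DFinsupp.notMem_support_iff.mp hm'
    rw [hsgen] at hle
    obtain ⟨y, hy, hyx⟩ := hle x.2
    have heq : (y : ↥J) = x := Subtype.ext hyx
    rw [← heq]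
    exact hy
  have hext : ∀ j : ι, ∃ gj : R →ₗ[R] I j, ∀ (x : R) (hx : x ∈ J),
      gj x = (DirectSum.component R ι I j) (g ⟨x, hx⟩) := by
    intro j
    obtain ⟨gj, hgj⟩ := hI j J ((DirectSum.component R ι I j).comp g)
    exact ⟨gj, fun x hx => hgj x hx⟩
  choose gj hgj using hext
  refine ⟨∑ j ∈ T, (DirectSum.lof R ι I j).comp (gj j), ?_⟩
  intro x hx
  refine DFinsupp.ext fun m => ?_
  rw [LinearMap.sum_apply, DFinsupp.finset_sum_apply]
  by_cases hm : m ∈ T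
  · rw [Finset.sum_eq_single m]
    · rw [LinearMap.comp_apply, DirectSum.lof_eq_of, DirectSum.of_eq_same]
      exact hgj m x hx
    · intro j _ hjm
      rw [LinearMap.comp_apply, DirectSum.lof_eq_of, DirectSum.of_eq_of_ne _ _ _ hjm.symm]
    · intro habs
      exact absurd hm habs
  · rw [Finset.sum_eq_zero, hcomp m hm ⟨x, hx⟩]
    intro j hj
    have hjm : j ≠ m := fun h => hm (h ▸ hj)
    rw [LinearMap.comp_apply, DirectSum.lof_eq_of, DirectSum.of_eq_of_ne _ _ _ hjm.symm]

end Stmt15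


/-- Over a commutative noetherian ring, given a strictly increasing chain
`0 = N₀ ⊊ N₁ ⊊ ⋯` and nonzero maps `f i : N (i+1) → I i` vanishing on `N i`
into injective modules, there is a map `F : M → ⨁ᵢ Iᵢ` whose `i`-th component
extends `f i` and which does not factor through any finite sub-direct-sum. -/
theorem stmt_15 {R M : Type*} [CommRing R] [IsNoetherianRing R]
    [AddCommGroup M] [Module R M]
    (N : ℕ → Submodule R M) (hN : StrictMono N) (hN0 : N 0 = ⊥)
    {I : ℕ → Type*} [∀ i, AddCommGroup (I i)] [∀ i, Module R (I i)]
    [∀ i, Module.Injective R (I i)]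
    (f : ∀ i : ℕ, ↥(N (i + 1)) →ₗ[R] I i) (hf0 : ∀ i : ℕ, f i ≠ 0)
    (hfv : ∀ (i : ℕ) (x : ↥(N (i + 1))), (x : M) ∈ N i → f i x = 0) :
    ∃ F : M →ₗ[R] ⨁ i, I i,
      (∀ (i : ℕ) (x : M) (hx : x ∈ N (i + 1)), F x i = f i ⟨x, hx⟩) ∧
      ¬ ∃ Fs : Finset ℕ, ∀ (x : M) (j : ℕ), j ∉ Fs → F x j = 0 := by
  classical
  have hBaer : ∀ i : ℕ, Module.Baer R (I i) := fun i => Stmt15.baer_of_injective (I i)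
  have hBaerSum : Module.Baer R (⨁ i, I i) := Stmt15.baer_directSum hBaer
  -- extensions of the f i to all of M
  have hext : ∀ i : ℕ, ∃ gi : M →ₗ[R] I i, ∀ x : ↥(N (i + 1)), gi x = f i x := by
    intro i
    obtain ⟨gi, hgi⟩ := (hBaer i).extension_property (N (i + 1)).subtype
      (Submodule.injective_subtype _) (f i)
    exact ⟨gi, fun x => by rw [← hgi]; rfl⟩
  choose gext hgext using hext
  have hg0 : ∀ (k i : ℕ), k ≤ i → ∀ x : M, x ∈ N k → gext i x = 0 := by
    intro k i hki x hxk
    have hx1 : x ∈ N (i + 1) := hN.monotone (by omega) hxk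
    have hxi : x ∈ N i := hN.monotone hki hxk
    have h1 := hgext i ⟨x, hx1⟩
    have h2 := hfv i ⟨x, hx1⟩ hxi
    rw [show x = ((⟨x, hx1⟩ : ↥(N (i + 1))) : M) from rfl, h1, h2]
  set T : ℕ → (M →ₗ[R] ⨁ i, I i) :=
    fun k => ∑ i ∈ Finset.range k, (DirectSum.lof R ℕ I i).comp (gext i) with hTdef
  have hTstab : ∀ (k m : ℕ), k ≤ m → ∀ x : M, x ∈ N k → T m x = T k x := by
    intro k m hkm x hx
    rw [hTdef]
    simp only [LinearMap.sum_apply, LinearMap.comp_apply]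
    rw [Finset.range_eq_Ico, ← Finset.sum_Ico_consecutive _ (Nat.zero_le k) hkm]
    have hzero : ∑ i ∈ Finset.Ico k m, (DirectSum.lof R ℕ I i) (gext i x) = 0 := by
      refine Finset.sum_eq_zero fun i hi => ?_
      rw [hg0 k i (Finset.mem_Ico.mp hi).1 x hx, map_zero]
    rw [hzero, add_zero, Finset.range_eq_Ico]
  have hTcomp : ∀ (k i : ℕ) (x : M), i < k → (T k x) i = gext i x := by
    intro k i x hik
    rw [hTdef]
    simp only [LinearMap.sum_apply, LinearMap.comp_apply]
    rw [DFinsupp.finset_sum_apply]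
    rw [Finset.sum_eq_single i]
    · rw [DirectSum.lof_eq_of, DirectSum.of_eq_same]
    · intro j _ hji
      rw [DirectSum.lof_eq_of, DirectSum.of_eq_of_ne _ _ _ hji.symm]
    · intro habs
      exact absurd (Finset.mem_range.mpr hik) habs
  set Ntot : Submodule R M := ⨆ k, N k with hNtot
  have hmem : ∀ x : ↥Ntot, ∃ k, (x : M) ∈ N k := by
    intro x
    exact (Submodule.mem_iSup_of_chain ⟨N, hN.monotone⟩ (x : M)).mp x.2
  choose ch hch using hmem
  set φ : ↥Ntot →ₗ[R] ⨁ i, I i :=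
    { toFun := fun x => T (ch x) (x : M)
      map_add' := by
        intro a b
        set k0 := max (ch (a + b)) (max (ch a) (ch b)) with hk0
        have h1 : T (ch (a + b)) ((a : M) + (b : M)) = T k0 ((a : M) + (b : M)) := by
          refine (hTstab _ _ (le_max_left _ _) _ ?_).symm
          exact hch (a + b)
        show T (ch (a + b)) ((a : M) + (b : M)) = _
        rw [h1, map_add]
        rw [hTstab (ch a) k0 ((le_max_left _ _).trans (le_max_right _ _)) _ (hch a)]
        rw [hTstab (ch b) k0 ((le_max_right _ _).trans (le_max_right _ _)) _ (hch b)]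
      map_smul' := by
        intro r a
        set k0 := max (ch (r • a)) (ch a) with hk0
        have h1 : T (ch (r • a)) (r • (a : M)) = T k0 (r • (a : M)) := by
          refine (hTstab _ _ (le_max_left _ _) _ ?_).symm
          exact hch (r • a)
        show T (ch (r • a)) (r • (a : M)) = _
        rw [h1, map_smul, hTstab (ch a) k0 (le_max_right _ _) _ (hch a)]
        rfl } with hφdef
  have hφ : ∀ (x : ↥Ntot) (k : ℕ), (x : M) ∈ N k → φ x = T k (x : M) := by
    intro x k hk
    show T (ch x) (x : M) = T k (x : M)
    calc T (ch x) (x : M) = T (max k (ch x)) (x : M) :=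
          (hTstab _ _ (le_max_right _ _) _ (hch x)).symm
      _ = T k (x : M) := hTstab _ _ (le_max_left _ _) _ hk
  obtain ⟨F, hF⟩ := hBaerSum.extension_property Ntot.subtype (Submodule.injective_subtype _) φ
  have hmain : ∀ (i : ℕ) (x : M) (hx : x ∈ N (i + 1)), F x i = f i ⟨x, hx⟩ := by
    intro i x hx
    have hxN : x ∈ Ntot := (le_iSup N (i + 1)) hx
    have h1 : F x = φ ⟨x, hxN⟩ := by
      exact LinearMap.congr_fun hF ⟨x, hxN⟩
    rw [h1, hφ ⟨x, hxN⟩ (i + 1) hx, hTcomp (i + 1) i x (by omega)]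
    exact hgext i ⟨x, hx⟩
  refine ⟨F, hmain, ?_⟩
  rintro ⟨Fs, hFs⟩
  obtain ⟨i, hi⟩ := Infinite.exists_notMem_finset Fs
  have hex : ∃ x₀ : ↥(N (i + 1)), f i x₀ ≠ 0 := by
    by_contra hcon
    push_neg at hcon
    exact hf0 i (LinearMap.ext fun y => hcon y)
  obtain ⟨x₀, hx₀⟩ := hex
  have hFx : F (x₀ : M) i = f i x₀ := by
    have := hmain i (x₀ : M) x₀.2
    rwa [show (⟨(x₀ : M), x₀.2⟩ : ↥(N (i + 1))) = x₀ from Subtype.ext rfl] at this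
  exact hx₀ (hFx ▸ hFs (x₀ : M) i hi)
end
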